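/- arXiv:1810.05542 — 3 statements merged into one kernel-verified Lean document; each statement's English description precedes it below -/
import Mathlib

section
/- Simulation is transitive: let Σ₁, Σ₂, Σ₃ be systems in driving variable form with the same external space W, and let S₁₂ be a full simulation relation of Σ₁ by Σ₂ and S₂₃ a full simulation relation of Σ₂ by Σ₃. Then S₁₃ = {(x₁, x₃) : ∃ x₂ ∈ X₂ such that (x₁, x₂) ∈ S₁₂ and (x₂, x₃) ∈ S₂₃} is a full simulation relation of Σ₁ by Σ₃; in particular Σ₁ ≼ Σ₂ and Σ₂ ≼ Σ₃ imply Σ₁ ≼ Σ₃. -/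
/-- A linear system in driving variable form `ẋ = A x + G d`, `w = C x`, `0 = H x`. -/
structure DVSystem (X W D Y : Type)
    [AddCommGroup X] [Module ℝ X] [AddCommGroup W] [Module ℝ W]
    [AddCommGroup D] [Module ℝ D] [AddCommGroup Y] [Module ℝ Y] where
  A : X →ₗ[ℝ] X
  G : D →ₗ[ℝ] X
  C : X →ₗ[ℝ] W
  H : X →ₗ[ℝ] Y

namespace DVSystem

section basic

variable {X W D Y : Type}
  [AddCommGroup X] [Module ℝ X] [AddCommGroup W] [Module ℝ W]
  [AddCommGroup D] [Module ℝ D] [AddCommGroup Y] [Module ℝ Y]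

/-- A subspace `U` is consistent-admissible if `A U ⊆ U + im G` and `U ⊆ ker H`. -/
def Admissible (P : DVSystem X W D Y) (U : Submodule ℝ X) : Prop :=
  U.map P.A ≤ U ⊔ LinearMap.range P.G ∧ U ≤ LinearMap.ker P.H

/-- The consistent subspace `V*`: the largest consistent-admissible subspace. -/
def V (P : DVSystem X W D Y) : Submodule ℝ X :=
  sSup {U | P.Admissible U}

end basic

section sim

variable {W : Type} [AddCommGroup W] [Module ℝ W]
variable {X₁ D₁ Y₁ : Type} [AddCommGroup X₁] [Module ℝ X₁]
  [AddCommGroup D₁] [Module ℝ D₁] [AddCommGroup Y₁] [Module ℝ Y₁]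
variable {X₂ D₂ Y₂ : Type} [AddCommGroup X₂] [Module ℝ X₂]
  [AddCommGroup D₂] [Module ℝ D₂] [AddCommGroup Y₂] [Module ℝ Y₂]

/-- Items (i)-(ii) of the (algebraic) definition of a simulation relation. -/
def SimConds (P₁ : DVSystem X₁ W D₁ Y₁) (P₂ : DVSystem X₂ W D₂ Y₂)
    (S : Submodule ℝ (X₁ × X₂)) : Prop :=
  ∀ x₁ x₂, (x₁, x₂) ∈ S →
    (∀ d₁ : D₁, P₁.A x₁ + P₁.G d₁ ∈ P₁.V →
      ∃ d₂ : D₂, P₂.A x₂ + P₂.G d₂ ∈ P₂.V ∧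
        (P₁.A x₁ + P₁.G d₁, P₂.A x₂ + P₂.G d₂) ∈ S) ∧
    P₁.C x₁ = P₂.C x₂

/-- `S` is a simulation relation of `P₁` by `P₂`. -/
def IsSimRel (P₁ : DVSystem X₁ W D₁ Y₁) (P₂ : DVSystem X₂ W D₂ Y₂)
    (S : Submodule ℝ (X₁ × X₂)) : Prop :=
  S.map (LinearMap.fst ℝ X₁ X₂) ≤ P₁.V ∧ S.map (LinearMap.snd ℝ X₁ X₂) ≤ P₂.V ∧
    SimConds P₁ P₂ S

/-- `S` is a full simulation relation of `P₁` by `P₂`: in addition `π₁(S) = V₁*`. -/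
def IsFullSimRel (P₁ : DVSystem X₁ W D₁ Y₁) (P₂ : DVSystem X₂ W D₂ Y₂)
    (S : Submodule ℝ (X₁ × X₂)) : Prop :=
  IsSimRel P₁ P₂ S ∧ S.map (LinearMap.fst ℝ X₁ X₂) = P₁.V

/-- `P₁ ≼ P₂`: `P₁` is simulated by `P₂`. -/
def Simulates (P₁ : DVSystem X₁ W D₁ Y₁) (P₂ : DVSystem X₂ W D₂ Y₂) : Prop :=
  ∃ S : Submodule ℝ (X₁ × X₂), IsFullSimRel P₁ P₂ S

/-- The composition `P₁ ∘ P₂` obtained by sharing the external variable `w₁ = w₂`. -/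
noncomputable def comp (P₁ : DVSystem X₁ W D₁ Y₁) (P₂ : DVSystem X₂ W D₂ Y₂) :
    DVSystem (X₁ × X₂) W (D₁ × D₂) (Y₁ × Y₂ × W) where
  A := P₁.A.prodMap P₂.A
  G := P₁.G.prodMap P₂.G
  C := (1/2 : ℝ) • (P₁.C ∘ₗ LinearMap.fst ℝ X₁ X₂ + P₂.C ∘ₗ LinearMap.snd ℝ X₁ X₂)
  H := (P₁.H ∘ₗ LinearMap.fst ℝ X₁ X₂).prod
    ((P₂.H ∘ₗ LinearMap.snd ℝ X₁ X₂).prod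
      (P₁.C ∘ₗ LinearMap.fst ℝ X₁ X₂ - P₂.C ∘ₗ LinearMap.snd ℝ X₁ X₂))

end sim

section relcomp

variable {X₁ X₂ X₃ : Type} [AddCommGroup X₁] [Module ℝ X₁]
  [AddCommGroup X₂] [Module ℝ X₂] [AddCommGroup X₃] [Module ℝ X₃]

/-- Composition of linear relations:
`{(x₁, x₃) | ∃ x₂, (x₁, x₂) ∈ S₁₂ ∧ (x₂, x₃) ∈ S₂₃}`. -/
def relComp (S₁₂ : Submodule ℝ (X₁ × X₂)) (S₂₃ : Submodule ℝ (X₂ × X₃)) :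
    Submodule ℝ (X₁ × X₃) where
  carrier := {p | ∃ x₂, (p.1, x₂) ∈ S₁₂ ∧ (x₂, p.2) ∈ S₂₃}
  zero_mem' := ⟨0, by exact S₁₂.zero_mem, by exact S₂₃.zero_mem⟩
  add_mem' := by
    rintro a b ⟨y, hy1, hy2⟩ ⟨z, hz1, hz2⟩
    exact ⟨y + z, S₁₂.add_mem hy1 hz1, S₂₃.add_mem hy2 hz2⟩
  smul_mem' := by
    rintro c a ⟨y, h1, h2⟩
    exact ⟨c • y, S₁₂.smul_mem c h1, S₂₃.smul_mem c h2⟩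

/-- The pairing `{(x, (x₁, x₂)) | (x, x₁) ∈ S₁ ∧ (x, x₂) ∈ S₂}` of two relations. -/
def pairRel (S₁ : Submodule ℝ (X₁ × X₂)) (S₂ : Submodule ℝ (X₁ × X₃)) :
    Submodule ℝ (X₁ × X₂ × X₃) where
  carrier := {p | (p.1, p.2.1) ∈ S₁ ∧ (p.1, p.2.2) ∈ S₂}
  zero_mem' := ⟨by exact S₁.zero_mem, by exact S₂.zero_mem⟩
  add_mem' := by
    rintro a b ⟨ha1, ha2⟩ ⟨hb1, hb2⟩
    exact ⟨S₁.add_mem ha1 hb1, S₂.add_mem ha2 hb2⟩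
  smul_mem' := by
    rintro c a ⟨h1, h2⟩
    exact ⟨S₁.smul_mem c h1, S₂.smul_mem c h2⟩

end relcomp

section contract

variable {W : Type} [AddCommGroup W] [Module ℝ W]
variable {X D Y Xa Da Ya Xg Dg Yg : Type}
  [AddCommGroup X] [Module ℝ X] [AddCommGroup D] [Module ℝ D]
  [AddCommGroup Y] [Module ℝ Y]
  [AddCommGroup Xa] [Module ℝ Xa] [AddCommGroup Da] [Module ℝ Da]
  [AddCommGroup Ya] [Module ℝ Ya]
  [AddCommGroup Xg] [Module ℝ Xg] [AddCommGroup Dg] [Module ℝ Dg]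
  [AddCommGroup Yg] [Module ℝ Yg]

/-- `Sys` implements the contract `(Ass, Gar)` if `E ∘ Sys ≼ Gar` for every
compatible environment `E`, i.e., every environment with `E ≼ Ass`. -/
def Implements (Sys : DVSystem X W D Y)
    (Ass : DVSystem Xa W Da Ya) (Gar : DVSystem Xg W Dg Yg) : Prop :=
  ∀ (Xe De Ye : Type) [AddCommGroup Xe] [Module ℝ Xe] [FiniteDimensional ℝ Xe]
    [AddCommGroup De] [Module ℝ De] [FiniteDimensional ℝ De]
    [AddCommGroup Ye] [Module ℝ Ye] [FiniteDimensional ℝ Ye]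
    (E : DVSystem Xe W De Ye),
    Simulates E Ass → Simulates (comp E Sys) Gar

end contract

section refine

variable {W : Type} [AddCommGroup W] [Module ℝ W]
variable {Xa Da Ya Xg Dg Yg Xa' Da' Ya' Xg' Dg' Yg' : Type}
  [AddCommGroup Xa] [Module ℝ Xa] [AddCommGroup Da] [Module ℝ Da]
  [AddCommGroup Ya] [Module ℝ Ya]
  [AddCommGroup Xg] [Module ℝ Xg] [AddCommGroup Dg] [Module ℝ Dg]
  [AddCommGroup Yg] [Module ℝ Yg]
  [AddCommGroup Xa'] [Module ℝ Xa'] [AddCommGroup Da'] [Module ℝ Da']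
  [AddCommGroup Ya'] [Module ℝ Ya']
  [AddCommGroup Xg'] [Module ℝ Xg'] [AddCommGroup Dg'] [Module ℝ Dg']
  [AddCommGroup Yg'] [Module ℝ Yg']

/-- The contract `(Ass', Gar')` refines the contract `(Ass, Gar)`:
`Ass ≼ Ass'` and `Ass ∘ Gar' ≼ Gar`. -/
def Refines (Ass' : DVSystem Xa' W Da' Ya') (Gar' : DVSystem Xg' W Dg' Yg')
    (Ass : DVSystem Xa W Da Ya) (Gar : DVSystem Xg W Dg Yg) : Prop :=
  Simulates Ass Ass' ∧ Simulates (comp Ass Gar') Gar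

end refine

end DVSystem

namespace DVSystem

section relcomp

variable {X₁ X₂ X₃ : Type} [AddCommGroup X₁] [Module ℝ X₁]
  [AddCommGroup X₂] [Module ℝ X₂] [AddCommGroup X₃] [Module ℝ X₃]
  {S₁₂ : Submodule ℝ (X₁ × X₂)} {S₂₃ : Submodule ℝ (X₂ × X₃)}

theorem mem_relComp {x₁ : X₁} {x₃ : X₃} :
    (x₁, x₃) ∈ relComp S₁₂ S₂₃ ↔ ∃ x₂, (x₁, x₂) ∈ S₁₂ ∧ (x₂, x₃) ∈ S₂₃ :=
  Iff.rfl

theorem map_fst_relComp_le :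
    (relComp S₁₂ S₂₃).map (LinearMap.fst ℝ X₁ X₃) ≤ S₁₂.map (LinearMap.fst ℝ X₁ X₂) := by
  rintro _ ⟨⟨x₁, x₃⟩, ⟨x₂, h₁₂, -⟩, rfl⟩
  exact ⟨(x₁, x₂), h₁₂, rfl⟩

theorem map_snd_relComp_le :
    (relComp S₁₂ S₂₃).map (LinearMap.snd ℝ X₁ X₃) ≤ S₂₃.map (LinearMap.snd ℝ X₂ X₃) := by
  rintro _ ⟨⟨x₁, x₃⟩, ⟨x₂, -, h₂₃⟩, rfl⟩
  exact ⟨(x₂, x₃), h₂₃, rfl⟩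

theorem map_fst_relComp_of_map_snd_le
    (h : S₁₂.map (LinearMap.snd ℝ X₁ X₂) ≤ S₂₃.map (LinearMap.fst ℝ X₂ X₃)) :
    (relComp S₁₂ S₂₃).map (LinearMap.fst ℝ X₁ X₃) = S₁₂.map (LinearMap.fst ℝ X₁ X₂) := by
  refine le_antisymm map_fst_relComp_le ?_
  rintro _ ⟨⟨x₁, x₂⟩, h₁₂, rfl⟩
  obtain ⟨⟨_, x₃⟩, h₂₃, rfl⟩ := h ⟨(x₁, x₂), h₁₂, rfl⟩
  exact ⟨(x₁, x₃), ⟨_, h₁₂, h₂₃⟩, rfl⟩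

end relcomp

section trans

variable {W : Type} [AddCommGroup W] [Module ℝ W]
  {X₁ D₁ Y₁ : Type} [AddCommGroup X₁] [Module ℝ X₁]
  [AddCommGroup D₁] [Module ℝ D₁] [AddCommGroup Y₁] [Module ℝ Y₁]
  {X₂ D₂ Y₂ : Type} [AddCommGroup X₂] [Module ℝ X₂]
  [AddCommGroup D₂] [Module ℝ D₂] [AddCommGroup Y₂] [Module ℝ Y₂]
  {X₃ D₃ Y₃ : Type} [AddCommGroup X₃] [Module ℝ X₃]
  [AddCommGroup D₃] [Module ℝ D₃] [AddCommGroup Y₃] [Module ℝ Y₃]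
  {P₁ : DVSystem X₁ W D₁ Y₁} {P₂ : DVSystem X₂ W D₂ Y₂} {P₃ : DVSystem X₃ W D₃ Y₃}
  {S₁₂ : Submodule ℝ (X₁ × X₂)} {S₂₃ : Submodule ℝ (X₂ × X₃)}

theorem SimConds.relComp (h₁₂ : SimConds P₁ P₂ S₁₂) (h₂₃ : SimConds P₂ P₃ S₂₃) :
    SimConds P₁ P₃ (relComp S₁₂ S₂₃) := by
  rintro x₁ x₃ ⟨x₂, hx₁₂, hx₂₃⟩
  obtain ⟨step₁₂, hC₁₂⟩ := h₁₂ x₁ x₂ hx₁₂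
  obtain ⟨step₂₃, hC₂₃⟩ := h₂₃ x₂ x₃ hx₂₃
  refine ⟨fun d₁ hd₁ => ?_, hC₁₂.trans hC₂₃⟩
  obtain ⟨d₂, hd₂, hnext₁₂⟩ := step₁₂ d₁ hd₁
  obtain ⟨d₃, hd₃, hnext₂₃⟩ := step₂₃ d₂ hd₂
  exact ⟨d₃, hd₃, mem_relComp.2 ⟨_, hnext₁₂, hnext₂₃⟩⟩

theorem IsSimRel.relComp (h₁₂ : IsSimRel P₁ P₂ S₁₂) (h₂₃ : IsSimRel P₂ P₃ S₂₃) :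
    IsSimRel P₁ P₃ (relComp S₁₂ S₂₃) :=
  ⟨map_fst_relComp_le.trans h₁₂.1, map_snd_relComp_le.trans h₂₃.2.1,
    h₁₂.2.2.relComp h₂₃.2.2⟩

-- Fullness of `S₂₃` lets every `x₂` reached by `S₁₂` (a point of `V₂*`) be continued to `X₃`.
theorem IsFullSimRel.relComp (h₁₂ : IsFullSimRel P₁ P₂ S₁₂) (h₂₃ : IsFullSimRel P₂ P₃ S₂₃) :
    IsFullSimRel P₁ P₃ (relComp S₁₂ S₂₃) :=
  ⟨h₁₂.1.relComp h₂₃.1,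
    (map_fst_relComp_of_map_snd_le (h₂₃.2 ▸ h₁₂.1.2.1)).trans h₁₂.2⟩

end trans

end DVSystem

open DVSystem

theorem simulation_trans_general {W : Type} [AddCommGroup W] [Module ℝ W]
    {X₁ D₁ Y₁ : Type} [AddCommGroup X₁] [Module ℝ X₁]
    [AddCommGroup D₁] [Module ℝ D₁]
    [AddCommGroup Y₁] [Module ℝ Y₁]
    {X₂ D₂ Y₂ : Type} [AddCommGroup X₂] [Module ℝ X₂]
    [AddCommGroup D₂] [Module ℝ D₂]
    [AddCommGroup Y₂] [Module ℝ Y₂]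
    {X₃ D₃ Y₃ : Type} [AddCommGroup X₃] [Module ℝ X₃]
    [AddCommGroup D₃] [Module ℝ D₃]
    [AddCommGroup Y₃] [Module ℝ Y₃]
    (P₁ : DVSystem X₁ W D₁ Y₁) (P₂ : DVSystem X₂ W D₂ Y₂) (P₃ : DVSystem X₃ W D₃ Y₃)
    (S₁₂ : Submodule ℝ (X₁ × X₂)) (S₂₃ : Submodule ℝ (X₂ × X₃))
    (h₁₂ : IsFullSimRel P₁ P₂ S₁₂) (h₂₃ : IsFullSimRel P₂ P₃ S₂₃) :
    IsFullSimRel P₁ P₃ (relComp S₁₂ S₂₃) ∧ Simulates P₁ P₃ :=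
  ⟨h₁₂.relComp h₂₃, _, h₁₂.relComp h₂₃⟩

/-- Simulation is transitive: the relational composition of full simulation relations
is a full simulation relation; in particular `Σ₁ ≼ Σ₂` and `Σ₂ ≼ Σ₃` give `Σ₁ ≼ Σ₃`. -/
theorem simulation_trans {W : Type} [AddCommGroup W] [Module ℝ W] [FiniteDimensional ℝ W]
    {X₁ D₁ Y₁ : Type} [AddCommGroup X₁] [Module ℝ X₁] [FiniteDimensional ℝ X₁]
    [AddCommGroup D₁] [Module ℝ D₁] [FiniteDimensional ℝ D₁]
    [AddCommGroup Y₁] [Module ℝ Y₁] [FiniteDimensional ℝ Y₁]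
    {X₂ D₂ Y₂ : Type} [AddCommGroup X₂] [Module ℝ X₂] [FiniteDimensional ℝ X₂]
    [AddCommGroup D₂] [Module ℝ D₂] [FiniteDimensional ℝ D₂]
    [AddCommGroup Y₂] [Module ℝ Y₂] [FiniteDimensional ℝ Y₂]
    {X₃ D₃ Y₃ : Type} [AddCommGroup X₃] [Module ℝ X₃] [FiniteDimensional ℝ X₃]
    [AddCommGroup D₃] [Module ℝ D₃] [FiniteDimensional ℝ D₃]
    [AddCommGroup Y₃] [Module ℝ Y₃] [FiniteDimensional ℝ Y₃]
    (P₁ : DVSystem X₁ W D₁ Y₁) (P₂ : DVSystem X₂ W D₂ Y₂) (P₃ : DVSystem X₃ W D₃ Y₃)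
    (S₁₂ : Submodule ℝ (X₁ × X₂)) (S₂₃ : Submodule ℝ (X₂ × X₃))
    (h₁₂ : IsFullSimRel P₁ P₂ S₁₂) (h₂₃ : IsFullSimRel P₂ P₃ S₂₃) :
    IsFullSimRel P₁ P₃ (relComp S₁₂ S₂₃) ∧ Simulates P₁ P₃ :=
  simulation_trans_general P₁ P₂ P₃ S₁₂ S₂₃ h₁₂ h₂₃
end

section
/- For any two systems Σ₁, Σ₂ in driving variable form with the same external space W, the composition Σ₁ ∘ Σ₂ is simulated by each component: Σ₁ ∘ Σ₂ ≼ Σ₁ and Σ₁ ∘ Σ₂ ≼ Σ₂. -/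
open DVSystem

/-! A linear map `π` between state spaces that intertwines the dynamics, maps driving
directions to driving directions and respects the constraints and outputs carries `V*` into
`V*`, so its graph over `V*` is a full simulation relation. For `Σ₁ ∘ Σ₂` the two
projections are such maps: the constraint `C₁ x₁ = C₂ x₂` built into `H∘` makes the averaged
output `½ (C₁ x₁ + C₂ x₂)` agree with either component's output. -/

namespace DVSystem

section general

variable {W : Type} [AddCommGroup W] [Module ℝ W]
  {X D Y : Type} [AddCommGroup X] [Module ℝ X] [AddCommGroup D] [Module ℝ D]
  [AddCommGroup Y] [Module ℝ Y]
  {X' D' Y' : Type} [AddCommGroup X'] [Module ℝ X'] [AddCommGroup D'] [Module ℝ D']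
  [AddCommGroup Y'] [Module ℝ Y']

theorem admissible_V (P : DVSystem X W D Y) : P.Admissible P.V := by
  constructor
  · rw [V, (Submodule.gc_map_comap P.A).l_sSup]
    refine sSup_le ?_
    rintro _ ⟨U, rfl⟩
    exact iSup_le fun hU => hU.1.trans (sup_le_sup_right (le_sSup hU) _)
  · exact sSup_le fun U hU => hU.2

theorem V_le_ker_H (P : DVSystem X W D Y) : P.V ≤ LinearMap.ker P.H :=
  P.admissible_V.2

theorem map_V_le_V {P : DVSystem X W D Y} {P' : DVSystem X' W D' Y'}
    (π : X →ₗ[ℝ] X') (ρ : D →ₗ[ℝ] D')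
    (hA : π ∘ₗ P.A = P'.A ∘ₗ π) (hG : π ∘ₗ P.G = P'.G ∘ₗ ρ)
    (hH : (LinearMap.ker P.H).map π ≤ LinearMap.ker P'.H) :
    P.V.map π ≤ P'.V := by
  refine le_sSup (α := Submodule ℝ X') ⟨?_, (Submodule.map_mono P.V_le_ker_H).trans hH⟩
  calc (P.V.map π).map P'.A = (P.V.map P.A).map π := by
        rw [← Submodule.map_comp, ← Submodule.map_comp, hA]
    _ ≤ (P.V ⊔ LinearMap.range P.G).map π := Submodule.map_mono P.admissible_V.1
    _ = P.V.map π ⊔ LinearMap.range (P'.G ∘ₗ ρ) := by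
        rw [Submodule.map_sup, ← LinearMap.range_comp, hG]
    _ ≤ P.V.map π ⊔ LinearMap.range P'.G := sup_le_sup_left (LinearMap.range_comp_le_range _ _) _

theorem simulates_of_intertwining {P : DVSystem X W D Y} {P' : DVSystem X' W D' Y'}
    (π : X →ₗ[ℝ] X') (ρ : D →ₗ[ℝ] D')
    (hA : π ∘ₗ P.A = P'.A ∘ₗ π) (hG : π ∘ₗ P.G = P'.G ∘ₗ ρ)
    (hH : (LinearMap.ker P.H).map π ≤ LinearMap.ker P'.H)
    (hC : ∀ x ∈ LinearMap.ker P.H, P'.C (π x) = P.C x) :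
    Simulates P P' := by
  have hV := map_V_le_V π ρ hA hG hH
  have hfst : (P.V.map (LinearMap.id.prod π)).map (LinearMap.fst ℝ X X') = P.V := by
    rw [← Submodule.map_comp, LinearMap.fst_prod, Submodule.map_id]
  refine ⟨P.V.map (LinearMap.id.prod π), ⟨hfst.le, ?_, ?_⟩, hfst⟩
  · rwa [← Submodule.map_comp, LinearMap.snd_prod]
  rintro x₁ x₂ ⟨x, hx, hxx⟩
  obtain ⟨rfl, rfl⟩ := Prod.mk.inj hxx
  refine ⟨fun d hd => ⟨ρ d, ?_⟩, (hC x (P.V_le_ker_H hx)).symm⟩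
  have hstep : P'.A (π x) + P'.G (ρ d) = π (P.A x + P.G d) := by
    rw [map_add, ← LinearMap.comp_apply π, hA, ← LinearMap.comp_apply π, hG]
    rfl
  rw [hstep]
  exact ⟨hV (Submodule.mem_map_of_mem hd), _, hd, rfl⟩

end general

section comp

variable {W : Type} [AddCommGroup W] [Module ℝ W]
  {X₁ D₁ Y₁ : Type} [AddCommGroup X₁] [Module ℝ X₁] [AddCommGroup D₁] [Module ℝ D₁]
  [AddCommGroup Y₁] [Module ℝ Y₁]
  {X₂ D₂ Y₂ : Type} [AddCommGroup X₂] [Module ℝ X₂] [AddCommGroup D₂] [Module ℝ D₂]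
  [AddCommGroup Y₂] [Module ℝ Y₂]
  (P₁ : DVSystem X₁ W D₁ Y₁) (P₂ : DVSystem X₂ W D₂ Y₂)

theorem mem_ker_comp_H {x : X₁ × X₂} :
    x ∈ LinearMap.ker (comp P₁ P₂).H ↔
      x.1 ∈ LinearMap.ker P₁.H ∧ x.2 ∈ LinearMap.ker P₂.H ∧ P₁.C x.1 = P₂.C x.2 := by
  simp [comp, sub_eq_zero]

theorem comp_C_of_C_eq {x : X₁ × X₂} (h : P₁.C x.1 = P₂.C x.2) :
    (comp P₁ P₂).C x = P₁.C x.1 ∧ (comp P₁ P₂).C x = P₂.C x.2 := by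
  simp only [comp, LinearMap.smul_apply, LinearMap.add_apply, LinearMap.comp_apply,
    LinearMap.fst_apply, LinearMap.snd_apply, ← h]
  constructor <;> module

theorem comp_simulated_by_left : Simulates (comp P₁ P₂) P₁ :=
  simulates_of_intertwining (LinearMap.fst ℝ X₁ X₂) (LinearMap.fst ℝ D₁ D₂) rfl rfl
    (by rintro _ ⟨x, hx, rfl⟩; exact ((mem_ker_comp_H P₁ P₂).1 hx).1)
    fun _ hx => ((comp_C_of_C_eq P₁ P₂ ((mem_ker_comp_H P₁ P₂).1 hx).2.2).1).symm

theorem comp_simulated_by_right : Simulates (comp P₁ P₂) P₂ :=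
  simulates_of_intertwining (LinearMap.snd ℝ X₁ X₂) (LinearMap.snd ℝ D₁ D₂) rfl rfl
    (by rintro _ ⟨x, hx, rfl⟩; exact ((mem_ker_comp_H P₁ P₂).1 hx).2.1)
    fun _ hx => ((comp_C_of_C_eq P₁ P₂ ((mem_ker_comp_H P₁ P₂).1 hx).2.2).2).symm

end comp

end DVSystem

theorem comp_simulated_by_components_general {W : Type} [AddCommGroup W] [Module ℝ W]
    {X₁ D₁ Y₁ : Type} [AddCommGroup X₁] [Module ℝ X₁]
    [AddCommGroup D₁] [Module ℝ D₁]
    [AddCommGroup Y₁] [Module ℝ Y₁]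
    {X₂ D₂ Y₂ : Type} [AddCommGroup X₂] [Module ℝ X₂]
    [AddCommGroup D₂] [Module ℝ D₂]
    [AddCommGroup Y₂] [Module ℝ Y₂]
    (P₁ : DVSystem X₁ W D₁ Y₁) (P₂ : DVSystem X₂ W D₂ Y₂) :
    Simulates (comp P₁ P₂) P₁ ∧ Simulates (comp P₁ P₂) P₂ :=
  ⟨comp_simulated_by_left P₁ P₂, comp_simulated_by_right P₁ P₂⟩

/-- The composition `Σ₁ ∘ Σ₂` is simulated by each of its components. -/
theorem comp_simulated_by_components {W : Type} [AddCommGroup W] [Module ℝ W] [FiniteDimensional ℝ W]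
    {X₁ D₁ Y₁ : Type} [AddCommGroup X₁] [Module ℝ X₁] [FiniteDimensional ℝ X₁]
    [AddCommGroup D₁] [Module ℝ D₁] [FiniteDimensional ℝ D₁]
    [AddCommGroup Y₁] [Module ℝ Y₁] [FiniteDimensional ℝ Y₁]
    {X₂ D₂ Y₂ : Type} [AddCommGroup X₂] [Module ℝ X₂] [FiniteDimensional ℝ X₂]
    [AddCommGroup D₂] [Module ℝ D₂] [FiniteDimensional ℝ D₂]
    [AddCommGroup Y₂] [Module ℝ Y₂] [FiniteDimensional ℝ Y₂]
    (P₁ : DVSystem X₁ W D₁ Y₁) (P₂ : DVSystem X₂ W D₂ Y₂) :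
    Simulates (comp P₁ P₂) P₁ ∧ Simulates (comp P₁ P₂) P₂ :=
  comp_simulated_by_components_general P₁ P₂
end

section
/- Geometric characterization of simulation relations for contract implementation: consider a system Σ in driving variable form and a contract C = (A, G), let (A∘, G∘, C∘, H∘) be the realization of the composition A ∘ Σ with state space X^a × X, let V∘,* and V^{g,*} denote the consistent subspaces of A ∘ Σ and G respectively. Then a linear subspace S ⊆ (X^a × X) × X^g satisfies π_{X^a×X}(S) ⊆ V∘,* and π_{X^g}(S) ⊆ V^{g,*} and is a simulation relation of A ∘ Σ by G if and only if the following three conditions hold: (12) diag(A∘, A^g) S ⊆ S + im diag(G∘, G^g); (13) (im G∘ ∩ V∘,*) × {0} ⊆ S + ({0} × (im G^g ∩ V^{g,*})); (14) S ⊆ ker H∘ × ker H^g intersected with {((x∘, x^g)) : C∘ x∘ = C^g x^g}. -/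
open DVSystem

/-!
Read pointwise, (12) is the transfer property of a simulation relation with the input of the
simulating system left free, (13) is the transfer property at the state `(0, 0)`, and (14) is the
output and constraint condition. Conversely, (12) and (14) make both projections of `S`
admissible, hence contained in the consistent subspaces. Then a step `A₁ x₁ + G₁ d₁ ∈ V₁*` differs
from the step supplied by (12) by a vector `(G₁ d, 0)` with `G₁ d ∈ V₁*`, and (13) matches it
inside `S` up to an input of the second system.
-/

namespace DVSystem

section consistent

variable {X W D Y : Type}
  [AddCommGroup X] [Module ℝ X] [AddCommGroup W] [Module ℝ W]
  [AddCommGroup D] [Module ℝ D] [AddCommGroup Y] [Module ℝ Y]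
  {P : DVSystem X W D Y}

theorem Admissible.le_V {U : Submodule ℝ X} (h : P.Admissible U) : U ≤ P.V :=
  le_sSup h

theorem admissible_V_s7 : P.Admissible P.V := by
  refine ⟨?_, sSup_le fun _ hU => hU.2⟩
  rw [Submodule.map_le_iff_le_comap]
  refine sSup_le fun U hU => Submodule.map_le_iff_le_comap.mp ?_
  exact hU.1.trans (sup_le_sup_right hU.le_V _)

theorem V_le_ker : P.V ≤ LinearMap.ker P.H :=
  admissible_V_s7.2

theorem exists_A_add_G_mem_V {x : X} (hx : x ∈ P.V) : ∃ d, P.A x + P.G d ∈ P.V := by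
  obtain ⟨v, hv, _, ⟨e, rfl⟩, hve⟩ :=
    Submodule.mem_sup.mp (admissible_V_s7.1 (Submodule.mem_map_of_mem hx))
  exact ⟨-e, by rwa [map_neg, ← hve, add_neg_cancel_right]⟩

end consistent

section geometric

variable {W : Type} [AddCommGroup W] [Module ℝ W]
  {X₁ D₁ Y₁ : Type} [AddCommGroup X₁] [Module ℝ X₁]
  [AddCommGroup D₁] [Module ℝ D₁] [AddCommGroup Y₁] [Module ℝ Y₁]
  {X₂ D₂ Y₂ : Type} [AddCommGroup X₂] [Module ℝ X₂]
  [AddCommGroup D₂] [Module ℝ D₂] [AddCommGroup Y₂] [Module ℝ Y₂]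
  {P₁ : DVSystem X₁ W D₁ Y₁} {P₂ : DVSystem X₂ W D₂ Y₂} {S : Submodule ℝ (X₁ × X₂)}

theorem IsSimRel.map_prodMap_A_le (hS : IsSimRel P₁ P₂ S) :
    S.map (P₁.A.prodMap P₂.A) ≤ S ⊔ LinearMap.range (P₁.G.prodMap P₂.G) := by
  rintro _ ⟨⟨x₁, x₂⟩, hx, rfl⟩
  obtain ⟨d₁, hd₁⟩ := exists_A_add_G_mem_V (hS.1 (Submodule.mem_map_of_mem hx))
  obtain ⟨d₂, -, hd⟩ := (hS.2.2 x₁ x₂ hx).1 d₁ hd₁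
  refine Submodule.mem_sup.mpr ⟨_, hd, (P₁.G.prodMap P₂.G) (-d₁, -d₂), ⟨_, rfl⟩, ?_⟩
  simp

theorem IsSimRel.prod_range_G_inf_V_le (hS : IsSimRel P₁ P₂ S) :
    (LinearMap.range P₁.G ⊓ P₁.V).prod ⊥ ≤
      S ⊔ (⊥ : Submodule ℝ X₁).prod (LinearMap.range P₂.G ⊓ P₂.V) := by
  rintro ⟨_, _⟩ ⟨⟨⟨d₁, rfl⟩, hd₁⟩, (rfl : _ = 0)⟩
  obtain ⟨d₂, hd₂, hd⟩ := (hS.2.2 0 0 S.zero_mem).1 d₁ (by simpa using hd₁)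
  rw [map_zero, zero_add] at hd₂ hd
  refine Submodule.mem_sup.mpr ⟨_, hd, (0, -P₂.G d₂), ⟨rfl, ⟨-d₂, map_neg _ _⟩, neg_mem hd₂⟩, ?_⟩
  simp

theorem IsSimRel.le_ker (hS : IsSimRel P₁ P₂ S) :
    S ≤ (LinearMap.ker P₁.H).prod (LinearMap.ker P₂.H) ⊓
      LinearMap.ker (P₁.C ∘ₗ LinearMap.fst ℝ X₁ X₂ - P₂.C ∘ₗ LinearMap.snd ℝ X₁ X₂) := by
  refine le_inf ?_ ?_
  · exact (Submodule.le_prod_iff ℝ X₁ X₂).mpr ⟨hS.1.trans V_le_ker, hS.2.1.trans V_le_ker⟩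
  · rintro ⟨x₁, x₂⟩ hx
    simp [(hS.2.2 x₁ x₂ hx).2]

theorem admissible_map_fst
    (h12 : S.map (P₁.A.prodMap P₂.A) ≤ S ⊔ LinearMap.range (P₁.G.prodMap P₂.G))
    (hH : S ≤ (LinearMap.ker P₁.H).prod (LinearMap.ker P₂.H)) :
    P₁.Admissible (S.map (LinearMap.fst ℝ X₁ X₂)) := by
  refine ⟨?_, ((Submodule.le_prod_iff ℝ X₁ X₂).mp hH).1⟩
  calc (S.map (LinearMap.fst ℝ X₁ X₂)).map P₁.A
      = (S.map (P₁.A.prodMap P₂.A)).map (LinearMap.fst ℝ X₁ X₂) := by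
        rw [← Submodule.map_comp, ← Submodule.map_comp]; rfl
    _ ≤ (S ⊔ LinearMap.range (P₁.G.prodMap P₂.G)).map (LinearMap.fst ℝ X₁ X₂) :=
        Submodule.map_mono h12
    _ = S.map (LinearMap.fst ℝ X₁ X₂) ⊔ LinearMap.range P₁.G := by
        rw [Submodule.map_sup, LinearMap.range_prodMap, Submodule.prod_map_fst]

theorem admissible_map_snd
    (h12 : S.map (P₁.A.prodMap P₂.A) ≤ S ⊔ LinearMap.range (P₁.G.prodMap P₂.G))
    (hH : S ≤ (LinearMap.ker P₁.H).prod (LinearMap.ker P₂.H)) :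
    P₂.Admissible (S.map (LinearMap.snd ℝ X₁ X₂)) := by
  refine ⟨?_, ((Submodule.le_prod_iff ℝ X₁ X₂).mp hH).2⟩
  calc (S.map (LinearMap.snd ℝ X₁ X₂)).map P₂.A
      = (S.map (P₁.A.prodMap P₂.A)).map (LinearMap.snd ℝ X₁ X₂) := by
        rw [← Submodule.map_comp, ← Submodule.map_comp]; rfl
    _ ≤ (S ⊔ LinearMap.range (P₁.G.prodMap P₂.G)).map (LinearMap.snd ℝ X₁ X₂) :=
        Submodule.map_mono h12
    _ = S.map (LinearMap.snd ℝ X₁ X₂) ⊔ LinearMap.range P₂.G := by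
        rw [Submodule.map_sup, LinearMap.range_prodMap, Submodule.prod_map_snd]

theorem simConds_of_geometric
    (h12 : S.map (P₁.A.prodMap P₂.A) ≤ S ⊔ LinearMap.range (P₁.G.prodMap P₂.G))
    (h13 : (LinearMap.range P₁.G ⊓ P₁.V).prod ⊥ ≤
      S ⊔ (⊥ : Submodule ℝ X₁).prod (LinearMap.range P₂.G ⊓ P₂.V))
    (hC : S ≤ LinearMap.ker (P₁.C ∘ₗ LinearMap.fst ℝ X₁ X₂ - P₂.C ∘ₗ LinearMap.snd ℝ X₁ X₂))
    (hV₁ : S.map (LinearMap.fst ℝ X₁ X₂) ≤ P₁.V) (hV₂ : S.map (LinearMap.snd ℝ X₁ X₂) ≤ P₂.V) :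
    SimConds P₁ P₂ S := by
  intro x₁ x₂ hx
  refine ⟨fun d₁ hd₁ => ?_, by simpa [sub_eq_zero] using hC hx⟩
  obtain ⟨⟨s₁, s₂⟩, hs, _, ⟨⟨e₁, e₂⟩, rfl⟩, hse⟩ :=
    Submodule.mem_sup.mp (h12 (Submodule.mem_map_of_mem hx))
  simp only [LinearMap.prodMap_apply, Prod.mk_add_mk, Prod.mk.injEq] at hse
  have hG : P₁.G (e₁ + d₁) ∈ LinearMap.range P₁.G ⊓ P₁.V := by
    refine ⟨⟨_, rfl⟩, ?_⟩
    have : P₁.G (e₁ + d₁) = (P₁.A x₁ + P₁.G d₁) - s₁ := by rw [← hse.1, map_add]; abel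
    exact this ▸ sub_mem hd₁ (hV₁ (Submodule.mem_map_of_mem hs))
  obtain ⟨⟨t₁, t₂⟩, ht, ⟨_, _⟩, ⟨(rfl : _ = 0), ⟨f, rfl⟩, -⟩, hte⟩ :=
    Submodule.mem_sup.mp (h13 (x := (P₁.G (e₁ + d₁), 0)) ⟨hG, Submodule.zero_mem _⟩)
  simp only [Prod.mk_add_mk, Prod.mk.injEq, add_zero] at hte
  have hstep : (P₁.A x₁ + P₁.G d₁, P₂.A x₂ + P₂.G (-e₂ - f)) ∈ S := by
    convert S.add_mem hs ht using 1
    simp only [Prod.mk_add_mk, Prod.mk.injEq, hte.1, eq_neg_of_add_eq_zero_left hte.2, ← hse.1,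
      ← hse.2, map_add, map_sub, map_neg]
    constructor <;> abel
  exact ⟨-e₂ - f, hV₂ (Submodule.mem_map_of_mem hstep), hstep⟩

theorem isSimRel_iff_geometric :
    IsSimRel P₁ P₂ S ↔
      (S.map (P₁.A.prodMap P₂.A) ≤ S ⊔ LinearMap.range (P₁.G.prodMap P₂.G) ∧
        (LinearMap.range P₁.G ⊓ P₁.V).prod ⊥ ≤
          S ⊔ (⊥ : Submodule ℝ X₁).prod (LinearMap.range P₂.G ⊓ P₂.V) ∧
        S ≤ (LinearMap.ker P₁.H).prod (LinearMap.ker P₂.H) ⊓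
          LinearMap.ker (P₁.C ∘ₗ LinearMap.fst ℝ X₁ X₂ - P₂.C ∘ₗ LinearMap.snd ℝ X₁ X₂)) := by
  refine ⟨fun hS => ⟨hS.map_prodMap_A_le, hS.prod_range_G_inf_V_le, hS.le_ker⟩, ?_⟩
  rintro ⟨h12, h13, hS⟩
  have hV₁ := (admissible_map_fst h12 (hS.trans inf_le_left)).le_V
  have hV₂ := (admissible_map_snd h12 (hS.trans inf_le_left)).le_V
  exact ⟨hV₁, hV₂, simConds_of_geometric h12 h13 (hS.trans inf_le_right) hV₁ hV₂⟩

end geometric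

end DVSystem

theorem simRel_iff_geometric_general {W : Type} [AddCommGroup W] [Module ℝ W]
    {X D Y : Type} [AddCommGroup X] [Module ℝ X]
    [AddCommGroup D] [Module ℝ D]
    [AddCommGroup Y] [Module ℝ Y]
    {Xa Da Ya : Type} [AddCommGroup Xa] [Module ℝ Xa]
    [AddCommGroup Da] [Module ℝ Da]
    [AddCommGroup Ya] [Module ℝ Ya]
    {Xg Dg Yg : Type} [AddCommGroup Xg] [Module ℝ Xg]
    [AddCommGroup Dg] [Module ℝ Dg]
    [AddCommGroup Yg] [Module ℝ Yg]
    (Sys : DVSystem X W D Y) (Ass : DVSystem Xa W Da Ya) (Gar : DVSystem Xg W Dg Yg)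
    (S : Submodule ℝ ((Xa × X) × Xg)) :
    IsSimRel (comp Ass Sys) Gar S ↔
      (S.map (((comp Ass Sys).A).prodMap Gar.A) ≤
          S ⊔ LinearMap.range (((comp Ass Sys).G).prodMap Gar.G) ∧
        Submodule.prod (LinearMap.range (comp Ass Sys).G ⊓ (comp Ass Sys).V)
            (⊥ : Submodule ℝ Xg) ≤
          S ⊔ Submodule.prod (⊥ : Submodule ℝ (Xa × X))
            (LinearMap.range Gar.G ⊓ Gar.V) ∧
        S ≤ Submodule.prod (LinearMap.ker (comp Ass Sys).H) (LinearMap.ker Gar.H) ⊓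
          LinearMap.ker ((comp Ass Sys).C ∘ₗ LinearMap.fst ℝ (Xa × X) Xg -
            Gar.C ∘ₗ LinearMap.snd ℝ (Xa × X) Xg)) :=
  isSimRel_iff_geometric

/-- Geometric characterization of simulation relations of `Ass ∘ Σ` by `Gar`:
conditions (12), (13), (14). -/
theorem simRel_iff_geometric {W : Type} [AddCommGroup W] [Module ℝ W] [FiniteDimensional ℝ W]
    {X D Y : Type} [AddCommGroup X] [Module ℝ X] [FiniteDimensional ℝ X]
    [AddCommGroup D] [Module ℝ D] [FiniteDimensional ℝ D]
    [AddCommGroup Y] [Module ℝ Y] [FiniteDimensional ℝ Y]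
    {Xa Da Ya : Type} [AddCommGroup Xa] [Module ℝ Xa] [FiniteDimensional ℝ Xa]
    [AddCommGroup Da] [Module ℝ Da] [FiniteDimensional ℝ Da]
    [AddCommGroup Ya] [Module ℝ Ya] [FiniteDimensional ℝ Ya]
    {Xg Dg Yg : Type} [AddCommGroup Xg] [Module ℝ Xg] [FiniteDimensional ℝ Xg]
    [AddCommGroup Dg] [Module ℝ Dg] [FiniteDimensional ℝ Dg]
    [AddCommGroup Yg] [Module ℝ Yg] [FiniteDimensional ℝ Yg]
    (Sys : DVSystem X W D Y) (Ass : DVSystem Xa W Da Ya) (Gar : DVSystem Xg W Dg Yg)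
    (S : Submodule ℝ ((Xa × X) × Xg)) :
    IsSimRel (comp Ass Sys) Gar S ↔
      (S.map (((comp Ass Sys).A).prodMap Gar.A) ≤
          S ⊔ LinearMap.range (((comp Ass Sys).G).prodMap Gar.G) ∧
        Submodule.prod (LinearMap.range (comp Ass Sys).G ⊓ (comp Ass Sys).V)
            (⊥ : Submodule ℝ Xg) ≤
          S ⊔ Submodule.prod (⊥ : Submodule ℝ (Xa × X))
            (LinearMap.range Gar.G ⊓ Gar.V) ∧
        S ≤ Submodule.prod (LinearMap.ker (comp Ass Sys).H) (LinearMap.ker Gar.H) ⊓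
          LinearMap.ker ((comp Ass Sys).C ∘ₗ LinearMap.fst ℝ (Xa × X) Xg -
            Gar.C ∘ₗ LinearMap.snd ℝ (Xa × X) Xg)) :=
  simRel_iff_geometric_general Sys Ass Gar S
end
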